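/- For every graph G with n vertices and m edges, the restrained domination number satisfies γ^r(G) ≥ n − 2m/3. -/

import Mathlib

/-- `S` is a `k`-tuple restrained dominating set of `G`: every vertex has at least `k`
vertices of `S` in its closed neighborhood, and every vertex outside `S` has at least
`k` neighbors outside `S`. -/
def SimpleGraph.IsKRDS {V : Type*} (G : SimpleGraph V) (k : ℕ) (S : Set V) : Prop :=
  (∀ x : V, k ≤ ((insert x (G.neighborSet x)) ∩ S).ncard) ∧
  ∀ x : V, x ∉ S → k ≤ (G.neighborSet x \ S).ncard

/-- The `k`-tuple restrained domination number of `G`. -/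
noncomputable def SimpleGraph.kRDNum {V : Type*} [Fintype V] (G : SimpleGraph V) (k : ℕ) : ℕ :=
  sInf {m | ∃ S : Set V, G.IsKRDS k S ∧ S.ncard = m}

/-!
Let `S` be a restrained dominating set and `T` its complement. Summing degrees, every vertex
`t ∈ T` contributes its neighbours in `S` twice (once from each end) and its neighbours in `T`
once, so `2m ≥ Σ_{t ∈ T} (2 |N(t) ∩ S| + |N(t) ∩ T|) ≥ 3 |T|`. Applied to a minimum `S`,
this gives `γ^r(G) = n - |T| ≥ n - 2m/3`.
-/

open Finset

namespace SimpleGraph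

variable {V : Type*} [Fintype V] (G : SimpleGraph V)

lemma isKRDS_one_univ : G.IsKRDS 1 Set.univ := by
  refine ⟨fun x => ?_, fun x hx => absurd (Set.mem_univ x) hx⟩
  rw [Set.inter_univ, Nat.one_le_iff_ne_zero, Ne, Set.ncard_eq_zero]
  exact Set.insert_nonempty x _ |>.ne_empty

lemma exists_isKRDS_ncard_eq_kRDNum {k : ℕ} (h : ∃ S, G.IsKRDS k S) :
    ∃ S, G.IsKRDS k S ∧ S.ncard = G.kRDNum k := by
  obtain ⟨S, hS⟩ := h
  exact Nat.sInf_mem (s := {m | ∃ S, G.IsKRDS k S ∧ S.ncard = m}) ⟨_, S, hS, rfl⟩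

variable [DecidableRel G.Adj] [DecidableEq V]

lemma sum_card_neighborFinset_inter_comm (B C : Finset V) :
    ∑ b ∈ B, #(G.neighborFinset b ∩ C) = ∑ c ∈ C, #(G.neighborFinset c ∩ B) := by
  convert sum_card_bipartiteAbove_eq_sum_card_bipartiteBelow (r := G.Adj) using 3 with b _ c _
  · ext; simp [bipartiteAbove, and_comm]
  · ext; simp [bipartiteBelow, and_comm, G.adj_comm c]

lemma sum_two_mul_card_inter_add_card_sdiff_le (A : Finset V) :
    ∑ t ∈ Aᶜ, (2 * #(G.neighborFinset t ∩ A) + #(G.neighborFinset t \ A)) ≤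
      2 * #G.edgeFinset := by
  have hcross : ∑ t ∈ Aᶜ, #(G.neighborFinset t ∩ A) ≤ ∑ s ∈ A, G.degree s := by
    rw [← G.sum_card_neighborFinset_inter_comm]
    exact sum_le_sum fun s _ => card_le_card inter_subset_left
  calc ∑ t ∈ Aᶜ, (2 * #(G.neighborFinset t ∩ A) + #(G.neighborFinset t \ A))
      = ∑ t ∈ Aᶜ, #(G.neighborFinset t ∩ A) + ∑ t ∈ Aᶜ, G.degree t := by
        rw [← sum_add_distrib]
        refine sum_congr rfl fun t _ => ?_
        rw [← card_neighborFinset_eq_degree, ← card_inter_add_card_sdiff (G.neighborFinset t) A]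
        ring
    _ ≤ ∑ s ∈ A, G.degree s + ∑ t ∈ Aᶜ, G.degree t := by gcongr
    _ = 2 * #G.edgeFinset := by
        rw [add_comm, sum_compl_add_sum, sum_degrees_eq_twice_card_edges]

variable {G}

lemma IsKRDS.le_card_neighborFinset_inter {k : ℕ} {A : Finset V} (hA : G.IsKRDS k A) {t : V}
    (ht : t ∉ A) : k ≤ #(G.neighborFinset t ∩ A) := by
  have := hA.1 t
  rwa [Set.insert_inter_of_notMem (by simpa using ht), ← coe_neighborFinset, ← coe_inter,
    Set.ncard_coe_finset] at this

lemma IsKRDS.le_card_neighborFinset_sdiff {k : ℕ} {A : Finset V} (hA : G.IsKRDS k A) {t : V}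
    (ht : t ∉ A) : k ≤ #(G.neighborFinset t \ A) := by
  have := hA.2 t (by simpa using ht)
  rwa [← coe_neighborFinset, ← coe_sdiff, Set.ncard_coe_finset] at this

lemma IsKRDS.three_mul_card_compl_le {k : ℕ} {A : Finset V} (hA : G.IsKRDS k A) :
    3 * k * #Aᶜ ≤ 2 * #G.edgeFinset :=
  calc 3 * k * #Aᶜ = ∑ t ∈ Aᶜ, (2 * k + k) := by rw [sum_const, smul_eq_mul]; ring
    _ ≤ ∑ t ∈ Aᶜ, (2 * #(G.neighborFinset t ∩ A) + #(G.neighborFinset t \ A)) := by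
        refine sum_le_sum fun t ht => ?_
        rw [mem_compl] at ht
        gcongr
        exacts [hA.le_card_neighborFinset_inter ht, hA.le_card_neighborFinset_sdiff ht]
    _ ≤ 2 * #G.edgeFinset := G.sum_two_mul_card_inter_add_card_sdiff_le A

end SimpleGraph

/-- For any graph G with n vertices and m edges, γ^r(G) ≥ n − 2m/3. -/
theorem rDNum_lower_bound {V : Type*} [Fintype V] (G : SimpleGraph V) :
    (Fintype.card V : ℚ) - 2 * (G.edgeSet.ncard : ℚ) / 3 ≤ (G.kRDNum 1 : ℚ) := by
  classical
  obtain ⟨S, hS, hcard⟩ := G.exists_isKRDS_ncard_eq_kRDNum ⟨_, G.isKRDS_one_univ⟩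
  lift S to Finset V using S.toFinite
  have hbound : 3 * #Sᶜ ≤ 2 * #G.edgeFinset := by simpa using hS.three_mul_card_compl_le
  have hsplit := S.card_compl_add_card
  rw [← hcard, ← SimpleGraph.coe_edgeFinset, Set.ncard_coe_finset, Set.ncard_coe_finset]
  qify at hbound hsplit
  linarith
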